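/- arXiv:1406.6733 — 2 statements merged into one kernel-verified Lean document; each statement's English description precedes it below -/
import Mathlib

section
/- The class of ℵ-injective Banach spaces is a 3-space property: if 0 → F → E → G → 0 is a short exact sequence of Banach spaces (F a closed subspace of E with quotient G) and both F and G are ℵ-injective, then E is ℵ-injective. -/
open Cardinal

/-- The density character of a topological space: the least cardinality of a dense subset. -/
noncomputable def dens (X : Type) [TopologicalSpace X] : Cardinal :=
  sInf {c | ∃ s : Set X, Dense s ∧ #s = c}

/-- A Banach space `E` is `ℵ`-injective if for every Banach space `X` of density character
less than `ℵ` and every closed subspace `Y ⊆ X`, every bounded operator `t : Y → E`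
extends to a bounded operator `T : X → E`. -/
def AlephInjective (E : Type) [NormedAddCommGroup E] [NormedSpace ℝ E] [CompleteSpace E]
    (ℵ : Cardinal) : Prop :=
  ∀ (X : Type) [NormedAddCommGroup X] [NormedSpace ℝ X] [CompleteSpace X],
    dens X < ℵ → ∀ (Y : Submodule ℝ X), IsClosed (Y : Set X) →
    ∀ t : Y →L[ℝ] E, ∃ T : X →L[ℝ] E, ∀ y : Y, T y = t y

/-!
Replace `X` by `ℓ¹(Γ)` through a surjection `q : ℓ¹(Γ) → X` with `#Γ < ℵ`: index by a dense
subgroup `K` of `X` of small cardinality and send the unit vector at `k` to `k / ‖k‖`; every point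
of `K` then has a preimage of the same norm, and the controlled-closure argument of the open mapping
theorem makes `q` onto. On `ℓ¹(Γ)` the three-space argument is direct: extend `π ∘ t ∘ q` from
`q⁻¹(Y)` to `τ` by injectivity of `G`, lift `τ` through `π` (`ℓ¹` is projective), observe that
`t ∘ q` minus the lift takes values in `F` on `q⁻¹(Y)`, and correct the lift by an extension of that
difference given by injectivity of `F`. The result kills `ker q`, hence descends to `X`.
-/

namespace lp

variable {𝕜 : Type*} [NormedField 𝕜] {Γ : Type*} {X : Type*} [NormedAddCommGroup X]
  [NormedSpace 𝕜 X]

theorem summable_norm_of_one (f : lp (fun _ : Γ => 𝕜) 1) : Summable fun γ => ‖f γ‖ := by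
  simpa using (lp.memℓp f).summable (by norm_num : 0 < (1 : ENNReal).toReal)

theorem norm_eq_tsum_norm_of_one (f : lp (fun _ : Γ => 𝕜) 1) : ‖f‖ = ∑' γ, ‖f γ‖ := by
  simpa using lp.norm_rpow_eq_tsum (by norm_num : 0 < (1 : ENNReal).toReal) f

theorem summable_norm_smul_of_norm_le (f : lp (fun _ : Γ => 𝕜) 1) {e : Γ → X} {M : ℝ}
    (he : ∀ γ, ‖e γ‖ ≤ M) : Summable fun γ => ‖f γ • e γ‖ :=
  .of_nonneg_of_le (fun _ => norm_nonneg _)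
    (fun γ => by rw [norm_smul]; exact mul_le_mul_of_nonneg_left (he γ) (norm_nonneg _))
    ((summable_norm_of_one f).mul_right M)

noncomputable def sumCLM [CompleteSpace X] (e : Γ → X) {M : ℝ} (he : ∀ γ, ‖e γ‖ ≤ M) :
    lp (fun _ : Γ => 𝕜) 1 →L[𝕜] X :=
  LinearMap.mkContinuous
    { toFun f := ∑' γ, f γ • e γ
      map_add' f g := by
        simp only [lp.coeFn_add, Pi.add_apply, add_smul]
        exact (summable_norm_smul_of_norm_le f he).of_norm.tsum_add
          (summable_norm_smul_of_norm_le g he).of_norm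
      map_smul' c f := by
        simp only [lp.coeFn_smul, Pi.smul_apply, smul_eq_mul, mul_smul, RingHom.id_apply]
        exact (summable_norm_smul_of_norm_le f he).of_norm.tsum_const_smul c }
    M fun f => calc
      ‖∑' γ, f γ • e γ‖ ≤ ∑' γ, ‖f γ • e γ‖ :=
          norm_tsum_le_tsum_norm (summable_norm_smul_of_norm_le f he)
      _ ≤ ∑' γ, ‖f γ‖ * M := (summable_norm_smul_of_norm_le f he).tsum_le_tsum
          (fun γ => by rw [norm_smul]; exact mul_le_mul_of_nonneg_left (he γ) (norm_nonneg _))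
          ((summable_norm_of_one f).mul_right M)
      _ = M * ‖f‖ := by rw [tsum_mul_right, norm_eq_tsum_norm_of_one, mul_comm]

theorem sumCLM_single [CompleteSpace X] [DecidableEq Γ] (e : Γ → X) {M : ℝ}
    (he : ∀ γ, ‖e γ‖ ≤ M) (γ : Γ) (c : 𝕜) :
    sumCLM e he (lp.single 1 γ c) = c • e γ := by
  show ∑' γ', _ = _
  rw [tsum_eq_single γ fun γ' hγ' => by simp [hγ']]
  simp

end lp

section Factorization

variable {𝕜 : Type*} [NontriviallyNormedField 𝕜]
  {V W X E F : Type*} [NormedAddCommGroup V] [NormedSpace 𝕜 V]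
  [NormedAddCommGroup W] [NormedSpace 𝕜 W] [NormedAddCommGroup X] [NormedSpace 𝕜 X]
  [NormedAddCommGroup E] [NormedSpace 𝕜 E] [NormedAddCommGroup F] [NormedSpace 𝕜 F]

theorem lp.exists_comp_eq_of_surjective {Γ : Type*} [CompleteSpace E] [CompleteSpace F]
    (π : E →L[𝕜] F) (hπ : Function.Surjective π) (τ : lp (fun _ : Γ => 𝕜) 1 →L[𝕜] F) :
    ∃ L : lp (fun _ : Γ => 𝕜) 1 →L[𝕜] E, π.comp L = τ := by
  classical
  obtain ⟨C, hC0, hC⟩ := π.exists_preimage_norm_le hπ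
  choose pre hpre hpre_norm using fun γ => hC (τ (lp.single 1 γ 1))
  have hbound : ∀ γ, ‖pre γ‖ ≤ C * ‖τ‖ := fun γ => (hpre_norm γ).trans <| by
    gcongr
    simpa [lp.norm_single] using τ.le_opNorm (lp.single 1 γ 1)
  refine ⟨lp.sumCLM pre hbound, lp.ext_continuousLinearMap ENNReal.one_ne_top fun γ => ?_⟩
  exact ContinuousLinearMap.ext_ring (by simp [lp.sumCLM_single, hpre])

theorem ContinuousLinearMap.exists_comp_eq_of_ker_le [CompleteSpace W] [CompleteSpace X]
    (q : W →L[𝕜] X) (hq : Function.Surjective q) (T' : W →L[𝕜] E)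
    (h : q.ker ≤ T'.ker) : ∃ T : X →L[𝕜] E, T.comp q = T' := by
  obtain ⟨C, -, hC⟩ := q.exists_preimage_norm_le hq
  choose g hg hgC using hC
  have hT' : ∀ w, T' w = T' (g (q w)) := fun w => by
    have : w - g (q w) ∈ q.ker := by simp [hg]
    simpa [sub_eq_zero] using h this
  let Tₗ : X →ₗ[𝕜] E :=
    { toFun x := T' (g x)
      map_add' x y := by rw [← map_add, hT' (g x + g y), map_add q, hg, hg]
      map_smul' c x := by
        rw [RingHom.id_apply, ← map_smul, hT' (c • g x), map_smul q, hg] }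
  refine ⟨Tₗ.mkContinuous (‖T'‖ * C) fun x => ?_, ContinuousLinearMap.ext fun w => (hT' w).symm⟩
  calc ‖T' (g x)‖ ≤ ‖T'‖ * ‖g x‖ := T'.le_opNorm _
    _ ≤ ‖T'‖ * (C * ‖x‖) := by gcongr; exact hgC x
    _ = ‖T'‖ * C * ‖x‖ := by ring

theorem ContinuousLinearMap.exists_comp_eq_of_range_le [CompleteSpace E] [CompleteSpace F]
    (j : F →L[𝕜] E) {K : NNReal} (hj : AntilipschitzWith K j) (B : V →L[𝕜] E)
    (hB : B.range ≤ j.range) : ∃ s : V →L[𝕜] F, j.comp s = B := by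
  let e := j.equivRange hj.injective (hj.isClosed_range j.uniformContinuous)
  let B' := B.codRestrict j.range fun v => hB ⟨v, rfl⟩
  refine ⟨(e.symm : j.range →L[𝕜] F).comp B', ContinuousLinearMap.ext fun v => ?_⟩
  exact congrArg Subtype.val (e.apply_symm_apply (B' v))

theorem ContinuousLinearMap.exists_extension_of_surjective [CompleteSpace W] [CompleteSpace X]
    (q : W →L[𝕜] X) (hq : Function.Surjective q) {Y : Submodule 𝕜 X} (t : Y →L[𝕜] E)
    (T' : W →L[𝕜] E) (hT' : ∀ w (hw : q w ∈ Y), T' w = t ⟨q w, hw⟩) :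
    ∃ T : X →L[𝕜] E, ∀ y : Y, T y = t y := by
  have hker : q.ker ≤ T'.ker := fun w (hw : q w = 0) => by
    change T' w = 0
    rw [hT' w (hw ▸ Y.zero_mem), ← map_zero t]
    exact congrArg t (Subtype.ext hw)
  obtain ⟨T, hT⟩ := q.exists_comp_eq_of_ker_le hq T' hker
  refine ⟨T, fun y => ?_⟩
  obtain ⟨w, hw⟩ := hq y
  have hwY : q w ∈ Y := hw ▸ y.2
  calc T y = T' w := by rw [← hT, ← hw]; rfl
    _ = t y := by rw [hT' w hwY]; congr 1; exact Subtype.ext hw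

end Factorization

universe u

theorem exists_dense_mk_eq_dens (X : Type) [TopologicalSpace X] :
    ∃ s : Set X, Dense s ∧ #s = dens X :=
  csInf_mem (⟨#(Set.univ : Set X), Set.univ, dense_univ, rfl⟩ :
    {c | ∃ s : Set X, Dense s ∧ #s = c}.Nonempty)

theorem dens_le_mk_of_dense {X : Type} [TopologicalSpace X] {s : Set X} (hs : Dense s) :
    dens X ≤ #s :=
  csInf_le (OrderBot.bddBelow _) ⟨s, hs, rfl⟩

theorem AddSubgroup.mk_closure_range_le {ι G : Type u} [AddCommGroup G] (f : ι → G) :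
    #(AddSubgroup.closure (Set.range f)) ≤ max #ι ℵ₀ := by
  have hsurj : Function.Surjective fun a : ι →₀ ℤ =>
      (⟨a.sum fun i n => n • f i, AddSubgroup.mem_closure_range_iff.2 ⟨a, rfl⟩⟩ :
        AddSubgroup.closure (Set.range f)) := by
    rintro ⟨x, hx⟩
    obtain ⟨a, rfl⟩ := AddSubgroup.mem_closure_range_iff.1 hx
    exact ⟨a, rfl⟩
  refine (Cardinal.mk_le_of_surjective hsurj).trans ?_
  rcases isEmpty_or_nonempty ι with hι | hι
  · exact (Cardinal.mk_le_aleph0).trans (le_max_right _ _)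
  · simp

theorem dens_le_of_dense_span {V : Type} [NormedAddCommGroup V] [NormedSpace ℝ V] {S : Set V}
    (hS : Dense (Submodule.span ℝ S : Set V)) : dens V ≤ max #S ℵ₀ := by
  let D := AddSubgroup.closure (Set.range fun p : ℚ × S => (p.1 : ℝ) • (p.2 : V))
  have hD_rat (c : ℚ) (x : V) (hx : x ∈ D) : (c : ℝ) • x ∈ D := by
    induction hx using AddSubgroup.closure_induction with
    | mem x hx =>
      obtain ⟨⟨c', s⟩, rfl⟩ := hx
      exact AddSubgroup.subset_closure ⟨(c * c', s), by simp [mul_smul]⟩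
    | zero => simp
    | add x y _ _ hx hy => simpa [smul_add] using D.add_mem hx hy
    | neg x _ hx => simpa [smul_neg] using D.neg_mem hx
  have hD_real (r : ℝ) (x : V) (hx : x ∈ closure (D : Set V)) : r • x ∈ closure (D : Set V) :=
    map_mem_closure₂ continuous_smul (Rat.denseRange_cast r) hx
      fun _ ⟨c, hc⟩ y hy => hc ▸ hD_rat c y hy
  have hspan : (Submodule.span ℝ S : Set V) ⊆ D.topologicalClosure := fun x hx => by
    induction hx using Submodule.span_induction with
    | mem s hs =>
      exact subset_closure (AddSubgroup.subset_closure ⟨((1 : ℚ), ⟨s, hs⟩), by simp⟩)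
    | zero => exact zero_mem _
    | add x y _ _ hx hy => exact add_mem hx hy
    | smul r x _ hx => exact hD_real r x hx
  have hD : Dense (D : Set V) := dense_closure.1 (hS.mono hspan)
  calc dens V ≤ #D := dens_le_mk_of_dense hD
    _ ≤ max #(ℚ × S) ℵ₀ :=
      AddSubgroup.mk_closure_range_le fun p : ℚ × S => (p.1 : ℝ) • (p.2 : V)
    _ = max (ℵ₀ * #S) ℵ₀ := by simp
    _ ≤ max #S ℵ₀ := by
      refine max_le ((Cardinal.mul_le_max _ _).trans_eq ?_) (le_max_right _ _)
      rw [max_comm ℵ₀, max_assoc, max_self]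

theorem lp.dens_one_le (Γ : Type) : dens (lp (fun _ : Γ => ℝ) 1) ≤ max #Γ ℵ₀ := by
  classical
  let S := Set.range fun γ : Γ => lp.single 1 γ (1 : ℝ)
  have hS : Dense (Submodule.span ℝ S : Set (lp (fun _ : Γ => ℝ) 1)) := fun f =>
    mem_closure_of_tendsto (lp.hasSum_single ENNReal.one_ne_top f) <| .of_forall fun u =>
      Submodule.sum_mem _ fun γ _ => by
        have : lp.single 1 γ (f γ) = f γ • lp.single (E := fun _ : Γ => ℝ) 1 γ 1 := by
          rw [← lp.single_smul, smul_eq_mul, mul_one]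
        exact this ▸ Submodule.smul_mem _ (f γ) (Submodule.subset_span (Set.mem_range_self γ))
  calc dens (lp (fun _ : Γ => ℝ) 1) ≤ max #S ℵ₀ := dens_le_of_dense_span hS
    _ ≤ max #Γ ℵ₀ := by gcongr; exact Cardinal.mk_range_le

theorem lp.exists_surjective_of_dense {X : Type*} [NormedAddCommGroup X] [NormedSpace ℝ X]
    [CompleteSpace X] {K : AddSubgroup X} (hK : Dense (K : Set X)) :
    ∃ q : lp (fun _ : K => ℝ) 1 →L[ℝ] X, Function.Surjective q := by
  classical
  have hbound (k : K) : ‖‖(k : X)‖⁻¹ • (k : X)‖ ≤ 1 := by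
    rw [norm_smul, norm_inv, norm_norm]
    exact inv_mul_le_one
  let q := lp.sumCLM (𝕜 := ℝ) (fun k : K => ‖(k : X)‖⁻¹ • (k : X)) hbound
  let f := q.toAddMonoidHom.mkNormedAddGroupHom ‖q‖ q.le_opNorm
  have hK_preimage : f.SurjectiveOnWith K 1 := fun k hk => by
    refine ⟨‖k‖ • lp.single 1 ⟨k, hk⟩ 1, ?_, by simp [norm_smul, lp.norm_single]⟩
    change q (‖k‖ • lp.single 1 ⟨k, hk⟩ 1) = k
    rw [map_smul, lp.sumCLM_single, one_smul]
    rcases eq_or_ne k 0 with rfl | hk0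
    · simp
    · exact smul_inv_smul₀ (norm_ne_zero_iff.2 hk0) k
  have hK_top : K.topologicalClosure = ⊤ :=
    SetLike.coe_injective (by simpa [AddSubgroup.topologicalClosure_coe] using hK.closure_eq)
  refine ⟨q, fun x => ?_⟩
  obtain ⟨w, hw, -⟩ :=
    controlled_closure_of_complete one_pos one_pos hK_preimage x (hK_top ▸ trivial)
  exact ⟨w, hw⟩

theorem exists_dense_addSubgroup_mk_le (X : Type) [TopologicalSpace X] [AddCommGroup X] :
    ∃ K : AddSubgroup X, Dense (K : Set X) ∧ #K ≤ max (dens X) ℵ₀ := by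
  obtain ⟨s, hs, hs_card⟩ := exists_dense_mk_eq_dens X
  refine ⟨AddSubgroup.closure (Set.range ((↑) : s → X)), hs.mono ?_, ?_⟩
  · rw [Subtype.range_coe]
    exact AddSubgroup.subset_closure
  · simpa [hs_card] using AddSubgroup.mk_closure_range_le ((↑) : s → X)

theorem exists_extension_of_forall_lift {ℵ : Cardinal} {F E G : Type}
    [NormedAddCommGroup F] [NormedSpace ℝ F] [CompleteSpace F]
    [NormedAddCommGroup E] [NormedSpace ℝ E] [CompleteSpace E]
    [NormedAddCommGroup G] [NormedSpace ℝ G] [CompleteSpace G]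
    {j : F →L[ℝ] E} {π : E →L[ℝ] G} {K : NNReal} (hj : AntilipschitzWith K j)
    (hexact : j.range = π.ker) (hF : AlephInjective F ℵ) (hG : AlephInjective G ℵ)
    {W : Type} [NormedAddCommGroup W] [NormedSpace ℝ W] [CompleteSpace W] (hW : dens W < ℵ)
    (hlift : ∀ τ : W →L[ℝ] G, ∃ L : W →L[ℝ] E, π.comp L = τ)
    {Z : Submodule ℝ W} (hZ : IsClosed (Z : Set W)) (t : Z →L[ℝ] E) :
    ∃ T : W →L[ℝ] E, ∀ z : Z, T z = t z := by
  obtain ⟨τ, hτ⟩ := hG W hW Z hZ (π.comp t)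
  obtain ⟨L, rfl⟩ := hlift τ
  let B := t - L.comp Z.subtypeL
  have hB : B.range ≤ j.range := by
    rintro _ ⟨z, rfl⟩
    rw [hexact, LinearMap.mem_ker]
    simpa [B, sub_eq_zero] using (hτ z).symm
  obtain ⟨s, hs⟩ := j.exists_comp_eq_of_range_le hj B hB
  obtain ⟨S, hS⟩ := hF W hW Z hZ s
  refine ⟨L + j.comp S, fun z => ?_⟩
  have hjs : j (s z) = t z - L z := congrArg (· z) hs
  simp [hS z, hjs]

theorem stmt2
    (ℵ : Cardinal) (hℵ : Cardinal.aleph0 < ℵ)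
    (F E G : Type)
    [NormedAddCommGroup F] [NormedSpace ℝ F] [CompleteSpace F]
    [NormedAddCommGroup E] [NormedSpace ℝ E] [CompleteSpace E]
    [NormedAddCommGroup G] [NormedSpace ℝ G] [CompleteSpace G]
    (j : F →L[ℝ] E) (π : E →L[ℝ] G)
    (hj : ∃ c : ℝ, 0 < c ∧ ∀ x : F, c * ‖x‖ ≤ ‖j x‖)
    (hπ : Function.Surjective π)
    (hexact : LinearMap.range (j : F →ₗ[ℝ] E) = LinearMap.ker (π : E →ₗ[ℝ] G))
    (hF : AlephInjective F ℵ) (hG : AlephInjective G ℵ) :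
    AlephInjective E ℵ := by
  intro X _ _ _ hX Y hY t
  obtain ⟨c, hc, hjc⟩ := hj
  have hj_anti : AntilipschitzWith ⟨c⁻¹, by positivity⟩ j :=
    j.antilipschitz_of_bound fun x => (le_inv_mul_iff₀ hc).2 (hjc x)
  obtain ⟨K, hK, hK_card⟩ := exists_dense_addSubgroup_mk_le X
  obtain ⟨q, hq⟩ := lp.exists_surjective_of_dense hK
  have hW : dens (lp (fun _ : K => ℝ) 1) < ℵ :=
    (lp.dens_one_le K).trans_lt (max_lt (hK_card.trans_lt (max_lt hX hℵ)) hℵ)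
  let Z := Y.comap q.toLinearMap
  let tZ : Z →L[ℝ] E := t.comp ((q.comp Z.subtypeL).codRestrict Y fun z => z.2)
  obtain ⟨T', hT'⟩ := exists_extension_of_forall_lift hj_anti hexact hF hG hW
    (lp.exists_comp_eq_of_surjective π hπ) (hY.preimage q.continuous) tZ
  exact q.exists_extension_of_surjective hq t T' fun w hw => hT' ⟨w, hw⟩
end

section
/- Let K be a compact Hausdorff space such that for every continuous affine surjection π : L → M between compact convex subsets of locally convex spaces with w(L) < ℵ, every continuous f : K → M lifts through π. Then K is an F_ℵ-space: for any families (f_α)_{α<Γ}, (g_α)_{α<Γ} in C(K, [0,1]) with Γ < ℵ and f_α ≤ g_β for all α, β, there exists a continuous h : K → [0,1] with f_α ≤ h ≤ g_α for all α. -/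
open Cardinal

/-- The weight of a topological space: the least cardinality of a base for the topology. -/
noncomputable def tweight (X : Type) [TopologicalSpace X] : Cardinal :=
  sInf {c | ∃ B : Set (Set X), TopologicalSpace.IsTopologicalBasis B ∧ #B = c}

/-!
The middle coordinate is the interpolant. The triples `(t, r, s)` of the unit cube with
`t α ≤ r ≤ s α` for all `α` form a compact convex set `L` of weight `< ℵ`, because `Γ` is small, and
forgetting `r` is a continuous affine surjection of `L` onto its image `M`. The map
`x ↦ ((f α x)_α, (g α x)_α)` lands in `M` (take `r = ⨆ α, f α x`), so it lifts to a continuous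
map `K → L`, whose middle coordinate is the required `h`.
-/

open TopologicalSpace Set

lemma mk_finset_lt {X : Type} {ℵ : Cardinal} (hℵ : ℵ₀ < ℵ) (hX : #X < ℵ) : #(Finset X) < ℵ := by
  classical
  exact ((mk_le_of_surjective List.toFinset_surjective).trans (mk_list_le_max X)).trans_lt
    (max_lt hℵ hX)

section Weight

variable {X Y : Type} [TopologicalSpace X] [TopologicalSpace Y]

lemma tweight_le_mk {B : Set (Set X)} (hB : IsTopologicalBasis B) : tweight X ≤ #B :=
  csInf_le' ⟨B, hB, rfl⟩

lemma exists_isTopologicalBasis_mk_eq_tweight (X : Type) [TopologicalSpace X] :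
    ∃ B : Set (Set X), IsTopologicalBasis B ∧ #B = tweight X :=
  csInf_mem (s := {c | ∃ B : Set (Set X), IsTopologicalBasis B ∧ #B = c})
    ⟨_, _, isTopologicalBasis_opens, rfl⟩

lemma tweight_subtype_le (S : Set X) : tweight S ≤ tweight X := by
  obtain ⟨B, hB, hBX⟩ := exists_isTopologicalBasis_mk_eq_tweight X
  calc tweight S ≤ #((Subtype.val ⁻¹' ·) '' B : Set (Set S)) :=
        tweight_le_mk (hB.isInducing .subtypeVal)
    _ ≤ #B := mk_image_le
    _ = tweight X := hBX

lemma tweight_prod_le : tweight (X × Y) ≤ tweight X * tweight Y := by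
  obtain ⟨B₁, hB₁, hB₁X⟩ := exists_isTopologicalBasis_mk_eq_tweight X
  obtain ⟨B₂, hB₂, hB₂Y⟩ := exists_isTopologicalBasis_mk_eq_tweight Y
  calc tweight (X × Y) ≤ #(image2 (· ×ˢ ·) B₁ B₂) := tweight_le_mk (hB₁.prod hB₂)
    _ ≤ #B₁ * #B₂ := mk_image2_le
    _ = tweight X * tweight Y := by rw [hB₁X, hB₂Y]

lemma tweight_le_aleph0 [SecondCountableTopology X] : tweight X ≤ ℵ₀ := by
  obtain ⟨B, hBc, -, hB⟩ := exists_countable_basis X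
  have := hBc.to_subtype
  exact (tweight_le_mk hB).trans mk_le_aleph0

lemma tweight_pi_le (ι : Type) [SecondCountableTopology Y] :
    tweight (ι → Y) ≤ #(Finset ι) * ℵ₀ := by
  classical
  obtain ⟨b, hbc, -, hb⟩ := exists_countable_basis Y
  have := hbc.to_subtype
  let box : (Σ F : Finset ι, F → b) → Set (ι → Y) := fun p =>
    (p.1 : Set ι).pi fun i => if h : i ∈ p.1 then p.2 ⟨i, h⟩ else univ
  have hbox : {S | ∃ (U : ι → Set Y) (F : Finset ι), (∀ i ∈ F, U i ∈ b) ∧ S = (F : Set ι).pi U}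
      ⊆ range box := by
    rintro _ ⟨U, F, hU, rfl⟩
    refine ⟨⟨F, fun i => ⟨U i, hU i i.2⟩⟩, pi_congr rfl fun i hi => ?_⟩
    simp only [dif_pos (Finset.mem_coe.1 hi)]
  calc tweight (ι → Y) ≤ #(range box) := (tweight_le_mk (isTopologicalBasis_pi fun _ => hb)).trans
        (mk_le_mk_of_subset hbox)
    _ ≤ #(Σ F : Finset ι, F → b) := mk_range_le
    _ ≤ #(Finset ι) * ℵ₀ := by
      simpa [mk_sigma, sum_const] using
        sum_le_sum (fun F : Finset ι => #(F → b)) (fun _ => ℵ₀) fun _ => mk_le_aleph0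

lemma tweight_pi_lt {ι : Type} [SecondCountableTopology Y] {ℵ : Cardinal} (hℵ : ℵ₀ < ℵ)
    (hι : #ι < ℵ) : tweight (ι → Y) < ℵ :=
  (tweight_pi_le ι).trans_lt (mul_lt_of_lt hℵ.le (mk_finset_lt hℵ hι) hℵ)

end Weight


section Sandwich

variable (Γ : Type)

def sandwichSet : Set ((Γ → ℝ) × ℝ × (Γ → ℝ)) :=
  (univ.pi fun _ => Icc 0 1) ×ˢ Icc 0 1 ×ˢ (univ.pi fun _ => Icc 0 1) ∩
    ⋂ α, {p | p.1 α ≤ p.2.1 ∧ p.2.1 ≤ p.2.2 α}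

def forgetMiddle : (Γ → ℝ) × ℝ × (Γ → ℝ) →L[ℝ] (Γ → ℝ) × (Γ → ℝ) :=
  (ContinuousLinearMap.fst ℝ _ _).prod
    ((ContinuousLinearMap.snd ℝ _ _).comp (ContinuousLinearMap.snd ℝ _ _))

lemma isCompact_sandwichSet : IsCompact (sandwichSet Γ) := by
  refine IsCompact.inter_right ?_ (isClosed_iInter fun α => ?_)
  · exact (isCompact_univ_pi fun _ => isCompact_Icc).prod
      (isCompact_Icc.prod (isCompact_univ_pi fun _ => isCompact_Icc))
  · rw [ofPred_and]
    exact (isClosed_le (by fun_prop) (by fun_prop)).inter (isClosed_le (by fun_prop) (by fun_prop))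

lemma convex_sandwichSet : Convex ℝ (sandwichSet Γ) := by
  refine Convex.inter ?_ (convex_iInter fun α => ?_)
  · exact (convex_pi fun _ _ => convex_Icc 0 1).prod
      ((convex_Icc 0 1).prod (convex_pi fun _ _ => convex_Icc 0 1))
  · rintro p ⟨hp₁, hp₂⟩ q ⟨hq₁, hq₂⟩ a b ha hb -
    constructor <;> simp only [Prod.fst_add, Prod.snd_add, Prod.smul_fst, Prod.smul_snd,
      Pi.add_apply, Pi.smul_apply, smul_eq_mul] <;> gcongr

variable {Γ}

lemma mem_image_forgetMiddle {t s : Γ → ℝ} (ht : ∀ α, t α ∈ Icc 0 1) (hs : ∀ α, s α ∈ Icc 0 1)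
    (hts : ∀ α β, t α ≤ s β) : (t, s) ∈ forgetMiddle Γ '' sandwichSet Γ := by
  refine ⟨(t, ⨆ α, t α, s), ⟨⟨fun α _ => ht α, ?_, fun α _ => hs α⟩, mem_iInter.2 fun α => ?_⟩, rfl⟩
  · exact ⟨Real.iSup_nonneg fun α => (ht α).1, Real.iSup_le (fun α => (ht α).2) zero_le_one⟩
  · exact ⟨le_ciSup ⟨1, forall_mem_range.2 fun β => (ht β).2⟩ α,
      Real.iSup_le (fun β => hts β α) (hs α).1⟩

lemma mem_Icc_of_forgetMiddle_eq {p : (Γ → ℝ) × ℝ × (Γ → ℝ)} (hp : p ∈ sandwichSet Γ)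
    {t s : Γ → ℝ} (h : forgetMiddle Γ p = (t, s)) (α : Γ) : p.2.1 ∈ Icc (t α) (s α) := by
  obtain ⟨rfl, rfl⟩ := Prod.ext_iff.1 h
  exact mem_iInter.1 hp.2 α

lemma tweight_subtype_lt_of_mk_lt {ℵ : Cardinal} (hℵ : ℵ₀ < ℵ) (hΓ : #Γ < ℵ)
    (S : Set ((Γ → ℝ) × ℝ × (Γ → ℝ))) : tweight S < ℵ := by
  have hpi : tweight (Γ → ℝ) < ℵ := tweight_pi_lt hℵ hΓ
  have hℝ : tweight ℝ < ℵ := tweight_le_aleph0.trans_lt hℵ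
  calc tweight S ≤ tweight ((Γ → ℝ) × ℝ × (Γ → ℝ)) := tweight_subtype_le S
    _ ≤ tweight (Γ → ℝ) * (tweight ℝ * tweight (Γ → ℝ)) :=
      tweight_prod_le.trans (mul_le_mul_right tweight_prod_le _)
    _ < ℵ := mul_lt_of_lt hℵ.le hpi (mul_lt_of_lt hℵ.le hℝ hpi)

end Sandwich

theorem stmt18_general
    (K : Type) [TopologicalSpace K]
    (ℵ : Cardinal) (hℵ : Cardinal.aleph 1 ≤ ℵ)
    -- K is projective with respect to continuous affine surjections between compact convex
    -- subsets of locally convex spaces, with domain of weight < ℵ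
    (hproj : ∀ (V W : Type)
      [AddCommGroup V] [Module ℝ V] [TopologicalSpace V]
      [IsTopologicalAddGroup V] [ContinuousSMul ℝ V] [LocallyConvexSpace ℝ V]
      [AddCommGroup W] [Module ℝ W] [TopologicalSpace W]
      [IsTopologicalAddGroup W] [ContinuousSMul ℝ W] [LocallyConvexSpace ℝ W]
      (L : Set V) (M : Set W), IsCompact L → Convex ℝ L → IsCompact M → Convex ℝ M →
      tweight L < ℵ →
      ∀ π : C(L, M), Function.Surjective π →
      (∀ (x y : L) (t : ℝ), 0 ≤ t → t ≤ 1 →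
        ∀ hz : t • (x : V) + (1 - t) • (y : V) ∈ L,
          ((π ⟨t • (x : V) + (1 - t) • (y : V), hz⟩ : M) : W)
            = t • ((π x : M) : W) + (1 - t) • ((π y : M) : W)) →
      ∀ f : C(K, M), ∃ g : C(K, L), ∀ x : K, π (g x) = f x) :
    ∀ (Γ : Type), #Γ < ℵ → ∀ f g : Γ → C(K, ℝ),
      (∀ α (x : K), f α x ∈ Set.Icc (0 : ℝ) 1) →
      (∀ α (x : K), g α x ∈ Set.Icc (0 : ℝ) 1) →
      (∀ α β, f α ≤ g β) →
      ∃ h : C(K, ℝ), (∀ x : K, h x ∈ Set.Icc (0 : ℝ) 1) ∧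
        ∀ α, f α ≤ h ∧ h ≤ g α := by
  intro Γ hΓ f g hf hg hfg
  set L := sandwichSet Γ
  set π := forgetMiddle Γ
  have hL := isCompact_sandwichSet Γ
  let πL : C(L, π '' L) :=
    ⟨L.imageFactorization π, (π.continuous.comp continuous_subtype_val).subtype_mk _⟩
  let F : C(K, π '' L) :=
    ⟨fun x => ⟨(fun α => f α x, fun α => g α x),
      mem_image_forgetMiddle (hf · x) (hg · x) fun α β => hfg α β x⟩, by fun_prop⟩
  obtain ⟨G, hG⟩ := hproj _ _ L (π '' L) hL (convex_sandwichSet Γ) (hL.image π.continuous)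
    ((convex_sandwichSet Γ).linear_image π.toLinearMap)
    (tweight_subtype_lt_of_mk_lt (aleph0_lt_aleph_one.trans_le hℵ) hΓ L)
    πL imageFactorization_surjective
    (fun x y t _ _ _ => (π.map_add _ _).trans (by rw [π.map_smul, π.map_smul]; rfl)) F
  refine ⟨⟨fun x => (G x).1.2.1, by fun_prop⟩, fun x => (G x).2.1.2.1, fun α => ?_⟩
  have hGx (x : K) := mem_Icc_of_forgetMiddle_eq (G x).2 (congrArg Subtype.val (hG x)) α
  exact ⟨fun x => (hGx x).1, fun x => (hGx x).2⟩

theorem stmt18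
    (K : Type) [TopologicalSpace K] [CompactSpace K] [T2Space K]
    (ℵ : Cardinal) (hℵ : Cardinal.aleph 1 ≤ ℵ)
    -- K is projective with respect to continuous affine surjections between compact convex
    -- subsets of locally convex spaces, with domain of weight < ℵ
    (hproj : ∀ (V W : Type)
      [AddCommGroup V] [Module ℝ V] [TopologicalSpace V]
      [IsTopologicalAddGroup V] [ContinuousSMul ℝ V] [LocallyConvexSpace ℝ V]
      [AddCommGroup W] [Module ℝ W] [TopologicalSpace W]
      [IsTopologicalAddGroup W] [ContinuousSMul ℝ W] [LocallyConvexSpace ℝ W]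
      (L : Set V) (M : Set W), IsCompact L → Convex ℝ L → IsCompact M → Convex ℝ M →
      tweight L < ℵ →
      ∀ π : C(L, M), Function.Surjective π →
      (∀ (x y : L) (t : ℝ), 0 ≤ t → t ≤ 1 →
        ∀ hz : t • (x : V) + (1 - t) • (y : V) ∈ L,
          ((π ⟨t • (x : V) + (1 - t) • (y : V), hz⟩ : M) : W)
            = t • ((π x : M) : W) + (1 - t) • ((π y : M) : W)) →
      ∀ f : C(K, M), ∃ g : C(K, L), ∀ x : K, π (g x) = f x) :
    ∀ (Γ : Type), #Γ < ℵ → ∀ f g : Γ → C(K, ℝ),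
      (∀ α (x : K), f α x ∈ Set.Icc (0 : ℝ) 1) →
      (∀ α (x : K), g α x ∈ Set.Icc (0 : ℝ) 1) →
      (∀ α β, f α ≤ g β) →
      ∃ h : C(K, ℝ), (∀ x : K, h x ∈ Set.Icc (0 : ℝ) 1) ∧
        ∀ α, f α ≤ h ∧ h ≤ g α :=
  stmt18_general K ℵ hℵ hproj
end
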